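/- Let λ_n > 0 for n = 2,...,N and define S(k) = Σ_{n=2}^N 1/(1 + (γτλ_n + k)/(γλ_n(γτλ_n + k) + k²mλ_n)) with γ, τ, m > 0 fixed. Then S is strictly increasing in k on (0, ∞) and lim_{k→∞} S(k) = N − 1. -/

import Mathlib

/-!
Write `l = λᵢ`, `b = γl`, `c = γτl` and `d = ml`. For `k > 0` the `i`-th summand is
`1 / (1 + g(k)⁻¹)` with `g(k) = b + d · k² / (c + k)`. Since `c ≥ 0`, the function
`k ↦ k² / (c + k)` is strictly increasing on `(0, ∞)` and tends to `∞` (it is at least `k - c`),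
so each summand increases strictly to `1`.
-/

open Filter Set Topology

noncomputable def dapiLoss (b c d k : ℝ) : ℝ :=
  1 / (1 + (c + k) / (b * (c + k) + k ^ 2 * d))

lemma strictMonoOn_sq_div_add {c : ℝ} (hc : 0 ≤ c) :
    StrictMonoOn (fun k : ℝ => k ^ 2 / (c + k)) (Ioi 0) := by
  intro x (hx : 0 < x) y (hy : 0 < y) hxy
  rw [div_lt_div_iff₀ (by positivity) (by positivity)]
  nlinarith [mul_pos (mul_pos hx hy) (sub_pos.2 hxy), mul_nonneg hc (sub_pos.2 hxy).le]

lemma tendsto_sq_div_add_atTop (c : ℝ) :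
    Tendsto (fun k : ℝ => k ^ 2 / (c + k)) atTop atTop := by
  refine tendsto_atTop_mono' _ ?_ (tendsto_atTop_add_const_right _ (-c) tendsto_id)
  filter_upwards [eventually_gt_atTop (-c)] with k hk
  rw [id, le_div_iff₀ (by linarith)]
  nlinarith [sq_nonneg c]

lemma dapiLoss_eq (b d : ℝ) {c k : ℝ} (hck : c + k ≠ 0) :
    dapiLoss b c d k = 1 / (1 + (b + d * (k ^ 2 / (c + k)))⁻¹) := by
  have hg : b + d * (k ^ 2 / (c + k)) = (b * (c + k) + k ^ 2 * d) / (c + k) := by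
    field_simp
  rw [dapiLoss, hg, inv_div]

lemma strictMonoOn_one_div_one_add_inv :
    StrictMonoOn (fun x : ℝ => 1 / (1 + x⁻¹)) (Ioi 0) := by
  intro x (hx : 0 < x) y (hy : 0 < y) hxy
  exact one_div_lt_one_div_of_lt (by positivity) (by gcongr)

lemma strictMonoOn_dapiLoss {b c d : ℝ} (hb : 0 ≤ b) (hc : 0 ≤ c) (hd : 0 < d) :
    StrictMonoOn (dapiLoss b c d) (Ioi 0) := by
  have hg : StrictMonoOn (fun k : ℝ => b + d * (k ^ 2 / (c + k))) (Ioi 0) :=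
    fun x hx y hy hxy =>
      add_lt_add_right (mul_lt_mul_of_pos_left (strictMonoOn_sq_div_add hc hx hy hxy) hd) b
  refine (strictMonoOn_one_div_one_add_inv.comp hg fun k (hk : 0 < k) => ?_).congr
    fun k (hk : 0 < k) => (dapiLoss_eq b d (by positivity)).symm
  show 0 < b + d * (k ^ 2 / (c + k))
  positivity

lemma tendsto_dapiLoss_atTop (b c : ℝ) {d : ℝ} (hd : 0 < d) :
    Tendsto (dapiLoss b c d) atTop (𝓝 1) := by
  have hg : Tendsto (fun k : ℝ => b + d * (k ^ 2 / (c + k))) atTop atTop :=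
    tendsto_atTop_add_const_left _ b ((tendsto_sq_div_add_atTop c).const_mul_atTop hd)
  have hlim : Tendsto (fun k => 1 / (1 + (b + d * (k ^ 2 / (c + k)))⁻¹)) atTop
      (𝓝 (1 / (1 + 0))) :=
    tendsto_const_nhds.div (hg.inv_tendsto_atTop.const_add 1) (by norm_num)
  rw [add_zero, div_one] at hlim
  refine hlim.congr' ?_
  filter_upwards [eventually_gt_atTop (-c)] with k hk
  exact (dapiLoss_eq b d (by linarith)).symm

theorem dapi_total_loss_strictMono_in_k_and_limit
    (γ τ m : ℝ) (hγ : 0 < γ) (hτ : 0 < τ) (hm : 0 < m)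
    (n : ℕ) (hn : 0 < n) (lam : Fin n → ℝ) (hlam : ∀ i, 0 < lam i) :
    StrictMonoOn (fun k : ℝ => ∑ i, 1 / (1 + (γ * τ * lam i + k) /
        (γ * lam i * (γ * τ * lam i + k) + k ^ 2 * m * lam i))) (Set.Ioi 0) ∧
    Filter.Tendsto (fun k : ℝ => ∑ i, 1 / (1 + (γ * τ * lam i + k) /
        (γ * lam i * (γ * τ * lam i + k) + k ^ 2 * m * lam i)))
      Filter.atTop (nhds (n : ℝ)) := by
  have hS : (fun k : ℝ => ∑ i, 1 / (1 + (γ * τ * lam i + k) /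
        (γ * lam i * (γ * τ * lam i + k) + k ^ 2 * m * lam i))) =
      fun k => ∑ i, dapiLoss (γ * lam i) (γ * τ * lam i) (m * lam i) k := by
    funext k
    simp only [dapiLoss, mul_assoc]
  rw [hS]
  constructor
  · have : Nonempty (Fin n) := ⟨⟨0, hn⟩⟩
    intro x hx y hy hxy
    refine Finset.sum_lt_sum_of_nonempty Finset.univ_nonempty fun i _ => ?_
    have hl := hlam i
    exact strictMonoOn_dapiLoss (by positivity) (by positivity) (by positivity) hx hy hxy
  · simpa using tendsto_finsetSum Finset.univ fun i _ =>
      tendsto_dapiLoss_atTop (γ * lam i) (γ * τ * lam i) (mul_pos hm (hlam i))
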